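/- Super-exponential decay of the derivative of the mixing profile: if η̃ is a mixing profile for η₊, η₋ ∈ (−1/√3, 1/√3), then for every C > 0 one has sup_{ξ ∈ ℝ} e^{C|ξ|} |η̃′(ξ)| < ∞. -/

import Mathlib

noncomputable section

open Real Filter MeasureTheory Set

/-- The coefficient `a(η) = (1 - 3η²)/(1 - η²)`. -/
def aGL (η : ℝ) : ℝ := (1 - 3 * η ^ 2) / (1 - η ^ 2)

/-- The primitive `A(η) = ∫₀^η a(s) ds`. -/
def AGL (η : ℝ) : ℝ := ∫ s in (0:ℝ)..η, aGL s

/-- A mixing profile for boundary values `ηp` (at `+∞`) and `ηm` (at `-∞`). -/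
def IsMixingProfile (ηp ηm : ℝ) (e : ℝ → ℝ) : Prop :=
  ContDiff ℝ 2 e ∧
  (∀ ξ, e ξ ∈ Set.Ioo (-(1 / Real.sqrt 3)) (1 / Real.sqrt 3)) ∧
  (∀ ξ, deriv (deriv (fun x => AGL (e x))) ξ + ξ / 2 * deriv e ξ = 0) ∧
  Filter.Tendsto e Filter.atTop (nhds ηp) ∧
  Filter.Tendsto e Filter.atBot (nhds ηm)

/-!
The flux `v = a(η̃) η̃' = (A ∘ η̃)'` satisfies `v' = -(ξ/2) η̃' = -ξ v / (2 a(η̃))`, a linear equation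
whose solution is `v(ξ) = v(0) exp(-∫₀^ξ s / (2 a(η̃(s))) ds)`. Since `0 < a ≤ 1` on
`(-1/√3, 1/√3)`, the exponent is at least `ξ²/4`, so `|v(ξ)| ≤ |v(0)| e^{-ξ²/4}`. Because `η̃` has
limits inside `(-1/√3, 1/√3)`, `a(η̃)` is bounded below by some `α > 0`, whence
`e^{C|ξ|} |η̃'(ξ)| ≤ |v(0)| e^{C|ξ| - ξ²/4} / α ≤ |v(0)| e^{C²} / α`.
-/

open Topology

theorem Continuous.exists_pos_forall_le_of_eventually_cocompact {X : Type*} [TopologicalSpace X]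
    {f : X → ℝ} (hf : Continuous f) (hpos : ∀ x, 0 < f x) {c : ℝ} (hc : 0 < c)
    (hcocompact : ∀ᶠ x in cocompact X, c ≤ f x) : ∃ α > 0, ∀ x, α ≤ f x := by
  cases isEmpty_or_nonempty X with
  | inl _ => exact ⟨c, hc, isEmptyElim⟩
  | inr hX =>
    -- `min f c` equals `c` off a compact set, so it attains its infimum.
    obtain ⟨x₀⟩ := hX
    have hmin : ∀ᶠ x in cocompact X, min (f x₀) c ≤ min (f x) c :=
      hcocompact.mono fun x hx => by simp [min_eq_right hx]
    obtain ⟨x, hx⟩ := (hf.min continuous_const).exists_forall_le' x₀ hmin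
    exact ⟨min (f x) c, lt_min (hpos x) hc, fun y => (hx y).trans (min_le_left _ _)⟩

theorem eq_mul_exp_neg_integral_of_hasDerivAt {φ v : ℝ → ℝ} (hφ : Continuous φ)
    (hv : ∀ x, HasDerivAt v (-(φ x * v x)) x) (ξ : ℝ) :
    v ξ = v 0 * exp (-∫ s in (0:ℝ)..ξ, φ s) := by
  set B : ℝ → ℝ := fun x => ∫ s in (0:ℝ)..x, φ s
  have hw : ∀ x, HasDerivAt (fun x => v x * exp (B x)) 0 x := fun x => by
    have hexp : HasDerivAt (fun x => exp (B x)) (exp (B x) * φ x) x :=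
      (hφ.integral_hasStrictDerivAt 0 x).hasDerivAt.exp
    have h := (hv x).fun_mul hexp
    rwa [show -(φ x * v x) * exp (B x) + v x * (exp (B x) * φ x) = 0 by ring] at h
  have hconst := is_const_of_deriv_eq_zero (fun x => (hw x).differentiableAt)
    (fun x => (hw x).deriv) ξ 0
  simp only [B, intervalIntegral.integral_same, exp_zero, mul_one] at hconst
  rw [← hconst, mul_assoc, ← exp_add, add_neg_cancel, exp_zero, mul_one]

theorem sq_div_four_le_integral_mul {k : ℝ → ℝ} (hk : Continuous k) (hk_ge : ∀ s, 1 / 2 ≤ k s)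
    (ξ : ℝ) : ξ ^ 2 / 4 ≤ ∫ s in (0:ℝ)..ξ, s * k s := by
  have hint : ∀ a b : ℝ, IntervalIntegrable (fun s => s * k s) volume a b := fun a b =>
    (continuous_id.mul hk).intervalIntegrable a b
  have hhalf : ∀ a b : ℝ, IntervalIntegrable (fun s : ℝ => s / 2) volume a b := fun a b =>
    (continuous_id.div_const 2).intervalIntegrable a b
  rcases le_total 0 ξ with hξ | hξ
  · calc ξ ^ 2 / 4 = ∫ s in (0:ℝ)..ξ, s / 2 := by
          rw [intervalIntegral.integral_div, integral_id]; ring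
      _ ≤ ∫ s in (0:ℝ)..ξ, s * k s :=
        intervalIntegral.integral_mono_on hξ (hhalf 0 ξ) (hint 0 ξ) fun s hs => by
          nlinarith [hk_ge s, hs.1]
  · have hmono : ∫ s in ξ..(0:ℝ), s * k s ≤ ∫ s in ξ..(0:ℝ), s / 2 :=
      intervalIntegral.integral_mono_on hξ (hint ξ 0) (hhalf ξ 0) fun s hs => by
        nlinarith [hk_ge s, hs.2]
    rw [intervalIntegral.integral_symm]
    rw [intervalIntegral.integral_div, integral_id] at hmono
    linarith

theorem abs_le_mul_exp_neg_sq_div_four_of_hasDerivAt {k v : ℝ → ℝ} (hk : Continuous k)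
    (hk_ge : ∀ s, 1 / 2 ≤ k s) (hv : ∀ x, HasDerivAt v (-(x * k x * v x)) x) (ξ : ℝ) :
    |v ξ| ≤ |v 0| * exp (-(ξ ^ 2 / 4)) := by
  rw [eq_mul_exp_neg_integral_of_hasDerivAt (continuous_id.mul hk) hv ξ, abs_mul,
    abs_of_pos (exp_pos _)]
  gcongr
  exact sq_div_four_le_integral_mul hk hk_ge ξ

theorem differentiableAt_aGL {y : ℝ} (hy : y ^ 2 < 1) : DifferentiableAt ℝ aGL y :=
  (by fun_prop : DifferentiableAt ℝ (fun y : ℝ => 1 - 3 * y ^ 2) y).div (by fun_prop)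
    (by linarith)

theorem hasDerivAt_AGL {y : ℝ} (hy : y ^ 2 < 1) : HasDerivAt AGL (aGL y) y := by
  have hcont : ContinuousOn aGL {y : ℝ | y ^ 2 < 1} := fun z hz =>
    (differentiableAt_aGL hz).continuousAt.continuousWithinAt
  have hopen : IsOpen {y : ℝ | y ^ 2 < 1} := isOpen_lt (by fun_prop) continuous_const
  have hsub : uIcc 0 y ⊆ {y : ℝ | y ^ 2 < 1} := fun z hz => by
    have hzy : |z - 0| ≤ |y - 0| :=
      abs_sub_le_of_uIcc_subset_uIcc (uIcc_subset_uIcc left_mem_uIcc hz)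
    rw [sub_zero, sub_zero] at hzy
    exact (sq_le_sq.2 hzy).trans_lt hy
  exact intervalIntegral.integral_hasDerivAt_right (hcont.mono hsub).intervalIntegrable
    (hcont.stronglyMeasurableAtFilter hopen _ hy) (hcont.continuousAt (hopen.mem_nhds hy))

theorem aGL_pos {y : ℝ} (hy : y ^ 2 < 1 / 3) : 0 < aGL y :=
  div_pos (by linarith) (by linarith)

theorem aGL_le_one {y : ℝ} (hy : y ^ 2 < 1) : aGL y ≤ 1 :=
  (div_le_one (by linarith)).2 (by nlinarith [sq_nonneg y])

theorem sq_lt_one_third_of_mem_Ioo {y : ℝ} (hy : y ∈ Ioo (-(1 / √3)) (1 / √3)) :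
    y ^ 2 < 1 / 3 := by
  have h := sq_lt_sq' hy.1 hy.2
  rwa [div_pow, one_pow, sq_sqrt (by norm_num)] at h

theorem eventually_half_aGL_le_of_tendsto {α : Type*} {l : Filter α} {f : α → ℝ} {η : ℝ}
    (hη : η ^ 2 < 1 / 3) (hf : Tendsto f l (𝓝 η)) : ∀ᶠ x in l, aGL η / 2 ≤ aGL (f x) :=
  ((differentiableAt_aGL (by linarith)).continuousAt.tendsto.comp hf).eventually
    (Ici_mem_nhds (half_lt_self (aGL_pos hη)))

namespace IsMixingProfile

variable {ηp ηm : ℝ} {e : ℝ → ℝ}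

theorem sq_lt (he : IsMixingProfile ηp ηm e) (ξ : ℝ) : e ξ ^ 2 < 1 / 3 :=
  sq_lt_one_third_of_mem_Ioo (he.2.1 ξ)

theorem continuous_aGL_comp (he : IsMixingProfile ηp ηm e) : Continuous fun ξ => aGL (e ξ) :=
  continuous_iff_continuousAt.2 fun ξ =>
    (differentiableAt_aGL (by linarith [he.sq_lt ξ])).continuousAt.comp
      (he.1.continuous.continuousAt)

theorem exists_pos_forall_le_aGL (he : IsMixingProfile ηp ηm e)
    (hp : ηp ∈ Ioo (-(1 / √3)) (1 / √3)) (hm : ηm ∈ Ioo (-(1 / √3)) (1 / √3)) :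
    ∃ α > 0, ∀ ξ, α ≤ aGL (e ξ) := by
  have hp' := sq_lt_one_third_of_mem_Ioo hp
  have hm' := sq_lt_one_third_of_mem_Ioo hm
  have hcocompact : ∀ᶠ ξ in cocompact ℝ, min (aGL ηp) (aGL ηm) / 2 ≤ aGL (e ξ) := by
    rw [cocompact_eq_atBot_atTop, eventually_sup]
    exact ⟨(eventually_half_aGL_le_of_tendsto hm' he.2.2.2.2).mono fun ξ h =>
        le_trans (by gcongr; exact min_le_right _ _) h,
      (eventually_half_aGL_le_of_tendsto hp' he.2.2.2.1).mono fun ξ h =>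
        le_trans (by gcongr; exact min_le_left _ _) h⟩
  exact he.continuous_aGL_comp.exists_pos_forall_le_of_eventually_cocompact
    (fun ξ => aGL_pos (he.sq_lt ξ)) (half_pos (lt_min (aGL_pos hp') (aGL_pos hm'))) hcocompact

theorem hasDerivAt_flux (he : IsMixingProfile ηp ηm e) (ξ : ℝ) :
    HasDerivAt (fun x => aGL (e x) * deriv e x)
      (-(ξ * (2 * aGL (e ξ))⁻¹ * (aGL (e ξ) * deriv e ξ))) ξ := by
  have hsq : ∀ x, e x ^ 2 < 1 := fun x => by linarith [he.sq_lt x]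
  have hdiff : Differentiable ℝ e := he.1.differentiable (by norm_num)
  have hdiff' : Differentiable ℝ (deriv e) :=
    ((contDiff_succ_iff_deriv (n := 1)).1 he.1).2.2.differentiable one_ne_zero
  have hflux : deriv (fun x => AGL (e x)) = fun x => aGL (e x) * deriv e x :=
    funext fun x => ((hasDerivAt_AGL (hsq x)).comp x (hdiff x).hasDerivAt).deriv
  have hflux' : deriv (fun x => aGL (e x) * deriv e x) ξ = -(ξ / 2 * deriv e ξ) := by
    rw [← hflux]
    linarith [he.2.2.1 ξ]
  have h : HasDerivAt (fun x => aGL (e x) * deriv e x)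
      (deriv (fun x => aGL (e x) * deriv e x) ξ) ξ :=
    (((differentiableAt_aGL (hsq ξ)).comp ξ (hdiff ξ)).mul (hdiff' ξ)).hasDerivAt
  convert hflux' ▸ h using 2
  field_simp [(aGL_pos (he.sq_lt ξ)).ne']

theorem abs_flux_le (he : IsMixingProfile ηp ηm e) (ξ : ℝ) :
    |aGL (e ξ) * deriv e ξ| ≤ |aGL (e 0) * deriv e 0| * exp (-(ξ ^ 2 / 4)) := by
  have hpos : ∀ x, 0 < 2 * aGL (e x) := fun x => mul_pos two_pos (aGL_pos (he.sq_lt x))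
  refine abs_le_mul_exp_neg_sq_div_four_of_hasDerivAt
    ((continuous_const.mul he.continuous_aGL_comp).inv₀ fun x => (hpos x).ne') (fun x => ?_)
    he.hasDerivAt_flux ξ
  show 1 / 2 ≤ (2 * aGL (e x))⁻¹
  rw [one_div]
  exact inv_anti₀ (hpos x) (by linarith [aGL_le_one (y := e x) (by linarith [he.sq_lt x])])

end IsMixingProfile

/-- Super-exponential decay of the derivative of the mixing profile. -/
theorem mixing_profile_deriv_decay
    (ηp ηm : ℝ)
    (hp : ηp ∈ Set.Ioo (-(1 / Real.sqrt 3)) (1 / Real.sqrt 3))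
    (hm : ηm ∈ Set.Ioo (-(1 / Real.sqrt 3)) (1 / Real.sqrt 3))
    (e : ℝ → ℝ) (he : IsMixingProfile ηp ηm e) :
    ∀ C > (0:ℝ), ∃ M : ℝ, ∀ ξ : ℝ, Real.exp (C * |ξ|) * |deriv e ξ| ≤ M := by
  obtain ⟨α, hα, hαle⟩ := he.exists_pos_forall_le_aGL hp hm
  set K := |aGL (e 0) * deriv e 0| / α
  have hgauss : ∀ ξ, |deriv e ξ| ≤ K * exp (-(ξ ^ 2 / 4)) := fun ξ => by
    have hpos := aGL_pos (he.sq_lt ξ)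
    calc |deriv e ξ| ≤ |aGL (e ξ) * deriv e ξ| / α := by
          rw [abs_mul, abs_of_pos hpos, le_div_iff₀ hα, mul_comm]
          exact mul_le_mul_of_nonneg_right (hαle ξ) (abs_nonneg _)
      _ ≤ K * exp (-(ξ ^ 2 / 4)) := by
          rw [div_mul_eq_mul_div]
          exact div_le_div_of_nonneg_right (he.abs_flux_le ξ) hα.le
  intro C _
  refine ⟨K * exp (C ^ 2), fun ξ => ?_⟩
  calc exp (C * |ξ|) * |deriv e ξ| ≤ exp (C * |ξ|) * (K * exp (-(ξ ^ 2 / 4))) := by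
        gcongr; exact hgauss ξ
    _ = K * exp (C * |ξ| - ξ ^ 2 / 4) := by rw [sub_eq_add_neg, exp_add]; ring
    _ ≤ K * exp (C ^ 2) := by
        gcongr
        nlinarith [sq_nonneg (|ξ| / 2 - C), sq_abs ξ]
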